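/- Let f be a bent Boolean function on F_2^{2m} such that f is extended affine equivalent to its dual f̂. Let g be a bent Boolean function that is extended translation equivalent to f (i.e. g(x) = f(x+b) + ⟨c,x⟩ + δ for some b, c ∈ F_2^{2m}, δ ∈ F_2). Then the dual ĝ of g is extended affine equivalent to g. -/

import Mathlib

open Finset

/-- Inner product on `F_2^n`. -/
def dotp {n : ℕ} (x y : Fin n → ZMod 2) : ZMod 2 := ∑ i, x i * y i

/-- Hamming weight of a Boolean function: the cardinality of its support. -/
def wt {n : ℕ} (f : (Fin n → ZMod 2) → ZMod 2) : ℕ :=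
  (Finset.univ.filter fun x => f x = 1).card

/-- Walsh–Hadamard transform of a Boolean function. -/
def walsh {n : ℕ} (f : (Fin n → ZMod 2) → ZMod 2) (x : Fin n → ZMod 2) : ℤ :=
  ∑ y : Fin n → ZMod 2, (-1 : ℤ) ^ (f y + dotp x y).val

/-- A Boolean function on `F_2^(2m)` is bent if its Walsh–Hadamard transform has constant
absolute value `2^m`. -/
def IsBent {m : ℕ} (f : (Fin (2 * m) → ZMod 2) → ZMod 2) : Prop :=
  ∀ x, |walsh f x| = 2 ^ m

/-- The dual of a bent function: `f̂ x = 0` if `W_f x = 2^m`, and `1` otherwise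
(for bent `f` the other case is exactly `W_f x = -2^m`). -/
def dual {m : ℕ} (f : (Fin (2 * m) → ZMod 2) → ZMod 2) :
    (Fin (2 * m) → ZMod 2) → ZMod 2 :=
  fun x => if walsh f x = 2 ^ m then 0 else 1

/-- The weight class of a bent function on `F_2^(2m)`:
`0` if its weight is `2^(2m-1) - 2^(m-1)`, and `1` otherwise. -/
def wc {m : ℕ} (f : (Fin (2 * m) → ZMod 2) → ZMod 2) : ZMod 2 :=
  if wt f = 2 ^ (2 * m - 1) - 2 ^ (m - 1) then 0 else 1

/-- The Cayley graph of a Boolean function: distinct `x`, `y` are adjacent iff `f (x+y) = 1`. -/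
def cayley {n : ℕ} (f : (Fin n → ZMod 2) → ZMod 2) : SimpleGraph (Fin n → ZMod 2) where
  Adj x y := x ≠ y ∧ f (x + y) = 1
  symm := ⟨fun x y h => ⟨h.1.symm, by rw [add_comm]; exact h.2⟩⟩
  loopless := ⟨fun x h => h.1 rfl⟩

instance cayleyAdjDecidable {n : ℕ} (f : (Fin n → ZMod 2) → ZMod 2) :
    DecidableRel (cayley f).Adj :=
  fun x y => inferInstanceAs (Decidable (x ≠ y ∧ f (x + y) = 1))

/-- Extended affine equivalence of Boolean functions. -/
def EAEquiv {n : ℕ} (f g : (Fin n → ZMod 2) → ZMod 2) : Prop :=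
  ∃ (A : (Fin n → ZMod 2) ≃ₗ[ZMod 2] (Fin n → ZMod 2)) (b c : Fin n → ZMod 2) (δ : ZMod 2),
    ∀ x, g x = f (A x + b) + dotp c x + δ

/-!
Translating the argument of `f` by `b` and adding `⟨c, x⟩ + δ` turns its Walsh transform at `x`
into `± W_f (x + c)`, the sign being `(-1) ^ (⟨x + c, b⟩ + δ)`. For bent `f` this says that the
dual of an ET-transform of `f` is an ET-transform of `f̂`. EA equivalence is an equivalence
relation, so `g ~ f ~ f̂ ~ ĝ`.
-/

open Matrix

section InnerProduct

variable {n k : ℕ}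

lemma dotp_eq_dotProduct (x y : Fin n → ZMod 2) : dotp x y = x ⬝ᵥ y := rfl

lemma dotp_add_right (x y z : Fin n → ZMod 2) : dotp x (y + z) = dotp x y + dotp x z :=
  dotProduct_add x y z

lemma dotp_add_left (x y z : Fin n → ZMod 2) : dotp (x + y) z = dotp x z + dotp y z :=
  add_dotProduct x y z

lemma dotp_neg_left (x y : Fin n → ZMod 2) : dotp (-x) y = -dotp x y := neg_dotProduct x y

lemma dotp_sub_right (x y z : Fin n → ZMod 2) : dotp x (y - z) = dotp x y - dotp x z :=
  dotProduct_sub x y z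

lemma dotp_comm (x y : Fin n → ZMod 2) : dotp x y = dotp y x := dotProduct_comm x y

lemma exists_dotp_comp (A : (Fin n → ZMod 2) →ₗ[ZMod 2] (Fin k → ZMod 2)) (c : Fin k → ZMod 2) :
    ∃ v, ∀ x, dotp c (A x) = dotp v x :=
  ⟨c ᵥ* LinearMap.toMatrix' A, fun x => by
    rw [dotp_eq_dotProduct, dotp_eq_dotProduct, ← dotProduct_mulVec, LinearMap.toMatrix'_mulVec]⟩

end InnerProduct

lemma neg_one_pow_val_add (a b : ZMod 2) :
    (-1 : ℤ) ^ (a + b).val = (-1 : ℤ) ^ a.val * (-1 : ℤ) ^ b.val := by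
  decide +revert

namespace EAEquiv

variable {n : ℕ} {f g h : (Fin n → ZMod 2) → ZMod 2}

lemma symm (hfg : EAEquiv f g) : EAEquiv g f := by
  obtain ⟨A, b, c, δ, hg⟩ := hfg
  obtain ⟨v, hv⟩ : ∃ v, ∀ x, dotp c (A.symm x) = dotp v x := exists_dotp_comp A.symm.toLinearMap c
  refine ⟨A.symm, -A.symm b, -v, dotp c (A.symm b) - δ, fun y => ?_⟩
  have hx := hg (A.symm y - A.symm b)
  rw [map_sub, LinearEquiv.apply_symm_apply, LinearEquiv.apply_symm_apply, sub_add_cancel,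
    dotp_sub_right] at hx
  rw [← sub_eq_add_neg, hx, hv, dotp_neg_left]
  ring

lemma trans (hfg : EAEquiv f g) (hgh : EAEquiv g h) : EAEquiv f h := by
  obtain ⟨A, b, c, δ, hg⟩ := hfg
  obtain ⟨A', b', c', δ', hh⟩ := hgh
  obtain ⟨v, hv⟩ : ∃ v, ∀ x, dotp c (A' x) = dotp v x := exists_dotp_comp A'.toLinearMap c
  refine ⟨A'.trans A, A b' + b, v + c', dotp c b' + δ + δ', fun x => ?_⟩
  rw [hh, hg, dotp_add_right, hv, LinearEquiv.trans_apply, map_add, add_assoc (A (A' x)),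
    dotp_add_left]
  ring

end EAEquiv

section Walsh

variable {n : ℕ} {f g : (Fin n → ZMod 2) → ZMod 2}

lemma walsh_of_translate {b c : Fin n → ZMod 2} {δ : ZMod 2}
    (hg : ∀ x, g x = f (x + b) + dotp c x + δ) (x : Fin n → ZMod 2) :
    walsh g x = (-1 : ℤ) ^ (δ - dotp (x + c) b).val * walsh f (x + c) := by
  rw [walsh, walsh, mul_sum, ← (Equiv.subRight b).sum_comp]
  refine sum_congr rfl fun z _ => ?_
  have hexp : g (z - b) + dotp x (z - b) = (δ - dotp (x + c) b) + (f z + dotp (x + c) z) := by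
    rw [hg, sub_add_cancel, dotp_sub_right, dotp_sub_right, dotp_add_left, dotp_add_left]
    ring
  rw [Equiv.subRight_apply, hexp, neg_one_pow_val_add]

end Walsh

section Dual

variable {m : ℕ} {f : (Fin (2 * m) → ZMod 2) → ZMod 2}

lemma IsBent.walsh_eq (hf : IsBent f) (x : Fin (2 * m) → ZMod 2) :
    walsh f x = (-1 : ℤ) ^ (dual f x).val * 2 ^ m := by
  have hpos : (0 : ℤ) < 2 ^ m := by positivity
  rcases abs_eq hpos.le |>.mp (hf x) with h | h
  · simp [dual, h]
  · simp [dual, h, ZMod.val_one'', show (-2 ^ m : ℤ) ≠ 2 ^ m by omega]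

lemma dual_eq_of_walsh_eq {x : Fin (2 * m) → ZMod 2} {a : ZMod 2}
    (h : walsh f x = (-1 : ℤ) ^ a.val * 2 ^ m) : dual f x = a := by
  have hpos : (0 : ℤ) < 2 ^ m := by positivity
  rcases (by decide : ∀ a : ZMod 2, a = 0 ∨ a = 1) a with rfl | rfl
  · simp [dual, h]
  · simp [dual, h, ZMod.val_one'', show (-2 ^ m : ℤ) ≠ 2 ^ m by omega]

end Dual

def ETEquiv {n : ℕ} (f g : (Fin n → ZMod 2) → ZMod 2) : Prop :=
  ∃ (b c : Fin n → ZMod 2) (δ : ZMod 2), ∀ x, g x = f (x + b) + dotp c x + δ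

lemma ETEquiv.eaEquiv {n : ℕ} {f g : (Fin n → ZMod 2) → ZMod 2} (hfg : ETEquiv f g) :
    EAEquiv f g :=
  let ⟨b, c, δ, hg⟩ := hfg
  ⟨LinearEquiv.refl _ _, b, c, δ, hg⟩

lemma IsBent.etEquiv_dual {m : ℕ} {f g : (Fin (2 * m) → ZMod 2) → ZMod 2} (hf : IsBent f)
    (hfg : ETEquiv f g) : ETEquiv (dual f) (dual g) := by
  obtain ⟨b, c, δ, hg⟩ := hfg
  refine ⟨c, -b, δ - dotp c b, fun x => dual_eq_of_walsh_eq ?_⟩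
  rw [walsh_of_translate hg, hf.walsh_eq, ← mul_assoc, ← neg_one_pow_val_add, dotp_add_left,
    dotp_neg_left, dotp_comm b x]
  congr 3
  ring

theorem dual_EA_of_ET_general {m : ℕ} (f g : (Fin (2 * m) → ZMod 2) → ZMod 2)
    (hf : IsBent f) (hfd : EAEquiv f (dual f))
    (b c : Fin (2 * m) → ZMod 2) (δ : ZMod 2)
    (hET : ∀ x, g x = f (x + b) + dotp c x + δ) :
    EAEquiv g (dual g) := by
  have hfg : ETEquiv f g := ⟨b, c, δ, hET⟩
  exact hfg.eaEquiv.symm.trans (hfd.trans (hf.etEquiv_dual hfg).eaEquiv)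

/-- if a bent function `f` is EA equivalent to its dual, then any bent
function `g` extended translation equivalent to `f` is EA equivalent to its dual. -/
theorem dual_EA_of_ET {m : ℕ} (f g : (Fin (2 * m) → ZMod 2) → ZMod 2)
    (hf : IsBent f) (hfd : EAEquiv f (dual f)) (hg : IsBent g)
    (b c : Fin (2 * m) → ZMod 2) (δ : ZMod 2)
    (hET : ∀ x, g x = f (x + b) + dotp c x + δ) :
    EAEquiv g (dual g) :=
  dual_EA_of_ET_general f g hf hfd b c δ hET
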